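/- arXiv:1005.3536 — 2 statements merged into one kernel-verified Lean document; each statement's English description precedes it below -/
import Mathlib

section
/- Let a, b ∈ ℂ with a ≠ 0 and a ≠ 1, and let f(z) = az + b, an affine bijection of ℂ with inverse f^{−1}(z) = z/a − b/a. Then for every z ∈ ℂ there exists a sequence of pairwise distinct integers (n_k) such that the iterates f^{∘n_k}(z) converge in ℂ. (Specifically: if |a| < 1 then f^{∘n}(z) → b/(1−a) as n → +∞; if |a| > 1 then f^{∘(−n)}(z) → b/(1−a) as n → +∞; and if |a| = 1 with a ≠ 1 then the orbit {f^{∘n}(z) : n ∈ ℤ} is bounded, so it has a convergent subsequence along distinct indices.) In particular the cyclic group generated by f does not act properly discontinuously on ℂ, so any affine transformation generating a discrete group action must have a = 1, i.e. be a translation. -/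
open Filter Topology

noncomputable section

/-!
Conjugating by the translation `z ↦ z - b / (1 - a)` turns `f` into `z ↦ a z`, so
`f^n z = c + aⁿ (z - c)` for all `n ∈ ℤ`, with `c = b / (1 - a)`. It therefore suffices that the
integer powers of `a` accumulate along distinct exponents: one of `a`, `a⁻¹` has norm at most `1`,
so its natural powers stay in the closed unit ball, which is compact.
-/

theorem Equiv.Perm.zpow_apply_sub_eq_of_apply_sub_eq {K : Type*} [DivisionRing K]
    {f : Equiv.Perm K} {a c : K} (ha : a ≠ 0) (hf : ∀ z, f z - c = a * (z - c)) :
    ∀ (n : ℤ) (z : K), (f ^ n) z - c = a ^ n * (z - c) := by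
  have hf_symm (z : K) : f.symm z - c = a⁻¹ * (z - c) :=
    calc f.symm z - c = a⁻¹ * (a * (f.symm z - c)) := (inv_mul_cancel_left₀ ha _).symm
      _ = a⁻¹ * (z - c) := by rw [← hf, Equiv.apply_symm_apply]
  intro n
  induction n using Int.induction_on with
  | zero => simp
  | succ n ih =>
    intro z
    rw [zpow_add_one, Equiv.Perm.mul_apply, ih, hf, zpow_add_one₀ ha, mul_assoc]
  | pred n ih =>
    intro z
    rw [zpow_sub_one, Equiv.Perm.mul_apply, Equiv.Perm.inv_def, ih, hf_symm,
      zpow_sub_one₀ ha, mul_assoc]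

theorem apply_sub_div_one_sub_eq {K : Type*} [Field K] {a b : K} (ha : a ≠ 1) (z : K) :
    a * z + b - b / (1 - a) = a * (z - b / (1 - a)) := by
  have h : (1 : K) - a ≠ 0 := sub_ne_zero.mpr ha.symm
  field_simp
  ring

theorem exists_strictMono_tendsto_pow_of_norm_le_one {K : Type*} [NormedRing K]
    [NormOneClass K] [ProperSpace K] {x : K} (hx : ‖x‖ ≤ 1) :
    ∃ ψ : ℕ → ℕ, StrictMono ψ ∧ ∃ w, Tendsto (fun k => x ^ ψ k) atTop (𝓝 w) := by
  have hmem (n : ℕ) : x ^ n ∈ Metric.closedBall (0 : K) 1 := by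
    rw [mem_closedBall_zero_iff]
    exact (norm_pow_le x n).trans (pow_le_one₀ (norm_nonneg x) hx)
  obtain ⟨w, -, ψ, hψ, hw⟩ := tendsto_subseq_of_bounded Metric.isBounded_closedBall hmem
  exact ⟨ψ, hψ, w, hw⟩

theorem exists_injective_tendsto_zpow {K : Type*} [NormedField K] [ProperSpace K] (a : K) :
    ∃ φ : ℕ → ℤ, Function.Injective φ ∧ ∃ w, Tendsto (fun k => a ^ φ k) atTop (𝓝 w) := by
  rcases le_total ‖a‖ 1 with ha | ha
  · obtain ⟨ψ, hψ, w, hw⟩ := exists_strictMono_tendsto_pow_of_norm_le_one ha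
    refine ⟨fun k => ψ k, Nat.cast_injective.comp hψ.injective, w, ?_⟩
    simpa only [zpow_natCast] using hw
  · have ha_inv : ‖a⁻¹‖ ≤ 1 := by
      rw [norm_inv]
      exact inv_le_one_of_one_le₀ ha
    obtain ⟨ψ, hψ, w, hw⟩ := exists_strictMono_tendsto_pow_of_norm_le_one ha_inv
    refine ⟨fun k => -(ψ k : ℤ), neg_injective.comp (Nat.cast_injective.comp hψ.injective), w, ?_⟩
    simpa only [zpow_neg, zpow_natCast, inv_pow] using hw

theorem affine_nontranslation_orbit_accumulates_general
    (a b : ℂ) (ha0 : a ≠ 0) (ha1 : a ≠ 1)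
    (f : Equiv.Perm ℂ) (hf : ∀ z : ℂ, f z = a * z + b) :
    ∀ z : ℂ, ∃ (φ : ℕ → ℤ), Function.Injective φ ∧
      ∃ w : ℂ, Tendsto (fun k => (f ^ (φ k) : Equiv.Perm ℂ) z) atTop (𝓝 w) := by
  intro z
  set c := b / (1 - a)
  have hf_conj (w : ℂ) : f w - c = a * (w - c) := by
    rw [hf]
    exact apply_sub_div_one_sub_eq ha1 w
  have h_orbit (n : ℤ) : (f ^ n) z = c + a ^ n * (z - c) := by
    rw [← Equiv.Perm.zpow_apply_sub_eq_of_apply_sub_eq ha0 hf_conj n z, add_sub_cancel]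
  obtain ⟨φ, hφ, w, hw⟩ := exists_injective_tendsto_zpow a
  refine ⟨φ, hφ, c + w * (z - c), ?_⟩
  simpa only [h_orbit] using tendsto_const_nhds.add (hw.mul_const (z - c))

/-- Let `f(z) = az + b` with `a ≠ 0`, `a ≠ 1`, viewed as a bijection of `ℂ` (an element of
the permutation group of `ℂ`, so that integer iterates `f^n`, `n ∈ ℤ`, make sense, with
`f⁻¹(z) = z/a − b/a`).  Then for every `z ∈ ℂ` there is an injective sequence of integers
`(n_k)` such that the iterates `f^{n_k}(z)` converge in `ℂ`.  (If `|a| < 1` the forward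
iterates converge to `b/(1−a)`; if `|a| > 1` the backward iterates do; if `|a| = 1`, `a ≠ 1`,
the whole orbit is bounded and hence has a convergent subsequence along distinct indices.)
In particular the cyclic group generated by `f` does not act properly discontinuously on `ℂ`. -/
theorem affine_nontranslation_orbit_accumulates
    (a b : ℂ) (ha0 : a ≠ 0) (ha1 : a ≠ 1)
    (f : Equiv.Perm ℂ) (hf : ∀ z : ℂ, f z = a * z + b)
    (hfinv : ∀ z : ℂ, f.symm z = z / a - b / a) :
    ∀ z : ℂ, ∃ (φ : ℕ → ℤ), Function.Injective φ ∧
      ∃ w : ℂ, Tendsto (fun k => (f ^ (φ k) : Equiv.Perm ℂ) z) atTop (𝓝 w) :=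
  affine_nontranslation_orbit_accumulates_general a b ha0 ha1 f hf
end
end

section
/- Let X : ℝ² → ℝ³ be a C³ map giving an isothermal parameterization, i.e. satisfying |∂_{α₁}X(α)|² = |∂_{α₂}X(α)|² and ∂_{α₁}X(α) · ∂_{α₂}X(α) = 0 for all α ∈ ℝ². Then (1/2) Δ(|∂_{α₁}X|²) = |∂_{α₁}∂_{α₂}X|² − ∂_{α₁}²X · ∂_{α₂}²X pointwise on ℝ², where Δ = ∂_{α₁}² + ∂_{α₂}² is the Laplacian on ℝ² applied to the scalar function |∂_{α₁}X|², and · denotes the Euclidean inner product in ℝ³. -/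
/-!
Write `X_u = ∂_u X` for directional derivatives. Differentiating `|X_u|² = |X_v|²` twice along `u`
and `⟪X_u, X_v⟫ = 0` once along `u` and once along `v` gives two second-order identities; after
using the symmetry of second and third derivatives of `X`, subtracting them leaves exactly
`½ (∂_u² + ∂_v²) |X_u|² = |∂_u X_v|² - ⟪∂_u X_u, ∂_v X_v⟫`.
-/

open scoped ENNReal RealInnerProductSpace

noncomputable section

def e2 (i : Fin 2) : EuclideanSpace ℝ (Fin 2) := EuclideanSpace.single i (1 : ℝ)

/-- Partial derivative `∂_{α_i} X (α)` of a map `X : ℝ² → ℝ³`. -/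
def pdX (X : EuclideanSpace ℝ (Fin 2) → EuclideanSpace ℝ (Fin 3)) (i : Fin 2)
    (α : EuclideanSpace ℝ (Fin 2)) : EuclideanSpace ℝ (Fin 3) :=
  fderiv ℝ X α (e2 i)

/-- Second partial derivative `∂_{α_i}∂_{α_j} X (α)`. -/
def pdX2 (X : EuclideanSpace ℝ (Fin 2) → EuclideanSpace ℝ (Fin 3)) (i j : Fin 2)
    (α : EuclideanSpace ℝ (Fin 2)) : EuclideanSpace ℝ (Fin 3) :=
  fderiv ℝ (fun a => fderiv ℝ X a (e2 j)) α (e2 i)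

/-- Laplacian `Δg = ∂_{α₁}² g + ∂_{α₂}² g` of a scalar function on `ℝ²`. -/
def lap2 (g : EuclideanSpace ℝ (Fin 2) → ℝ) (α : EuclideanSpace ℝ (Fin 2)) : ℝ :=
  ∑ i, fderiv ℝ (fun a => fderiv ℝ g a (e2 i)) α (e2 i)

section

variable {E F G : Type*} [NormedAddCommGroup E] [NormedSpace ℝ E]
  [NormedAddCommGroup F] [NormedSpace ℝ F] [NormedAddCommGroup G] [InnerProductSpace ℝ G]

theorem ContDiff.fderiv_apply_const {n m : WithTop ℕ∞} {f : E → F} (hf : ContDiff ℝ n f)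
    (hmn : m + 1 ≤ n) (v : E) : ContDiff ℝ m fun a => fderiv ℝ f a v :=
  (hf.fderiv_right hmn).clm_apply contDiff_const

theorem fderiv_fderiv_apply_const {f : E → F} {x : E}
    (hf : DifferentiableAt ℝ (fderiv ℝ f) x) (v w : E) :
    fderiv ℝ (fun a => fderiv ℝ f a v) x w = fderiv ℝ (fderiv ℝ f) x w v := by
  simp [fderiv_clm_apply hf (differentiableAt_const v)]

theorem ContDiff.fderiv_fderiv_apply_comm {f : E → F} (hf : ContDiff ℝ 2 f) (x v w : E) :
    fderiv ℝ (fun a => fderiv ℝ f a v) x w = fderiv ℝ (fun a => fderiv ℝ f a w) x v := by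
  have hf' : Differentiable ℝ (fderiv ℝ f) := (hf.fderiv_right le_rfl).differentiable one_ne_zero
  rw [fderiv_fderiv_apply_const (hf' x), fderiv_fderiv_apply_const (hf' x)]
  exact hf.contDiffAt.isSymmSndFDerivAt (by simp) w v

theorem fderiv_fderiv_inner_apply {f g : E → G} (hf : ContDiff ℝ 2 f) (hg : ContDiff ℝ 2 g)
    (x v w : E) :
    fderiv ℝ (fun a => fderiv ℝ (fun b => ⟪f b, g b⟫) a v) x w =
      ⟪f x, fderiv ℝ (fun a => fderiv ℝ g a v) x w⟫ + ⟪fderiv ℝ f x w, fderiv ℝ g x v⟫ +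
        (⟪fderiv ℝ f x v, fderiv ℝ g x w⟫ + ⟪fderiv ℝ (fun a => fderiv ℝ f a v) x w, g x⟫) := by
  have hf₁ : Differentiable ℝ f := hf.differentiable (by norm_num)
  have hg₁ : Differentiable ℝ g := hg.differentiable (by norm_num)
  have hfv : Differentiable ℝ fun a => fderiv ℝ f a v :=
    (hf.fderiv_apply_const le_rfl v).differentiable one_ne_zero
  have hgv : Differentiable ℝ fun a => fderiv ℝ g a v :=
    (hg.fderiv_apply_const le_rfl v).differentiable one_ne_zero
  have hfirst : (fun a => fderiv ℝ (fun b => ⟪f b, g b⟫) a v) =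
      fun a => ⟪f a, fderiv ℝ g a v⟫ + ⟪fderiv ℝ f a v, g a⟫ :=
    funext fun a => fderiv_inner_apply ℝ (hf₁ a) (hg₁ a) v
  rw [hfirst, fderiv_fun_add ((hf₁ x).inner ℝ (hgv x)) ((hfv x).inner ℝ (hg₁ x)),
    add_apply, fderiv_inner_apply ℝ (hf₁ x) (hgv x),
    fderiv_inner_apply ℝ (hfv x) (hg₁ x)]

theorem fderiv_fderiv_norm_sq_apply {f : E → G} (hf : ContDiff ℝ 2 f) (x v : E) :
    fderiv ℝ (fun a => fderiv ℝ (fun b => ‖f b‖ ^ 2) a v) x v =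
      2 * (‖fderiv ℝ f x v‖ ^ 2 + ⟪f x, fderiv ℝ (fun a => fderiv ℝ f a v) x v⟫) := by
  have hsq : (fun b => ‖f b‖ ^ 2) = fun b => ⟪f b, f b⟫ :=
    funext fun b => (real_inner_self_eq_norm_sq (f b)).symm
  rw [hsq, fderiv_fderiv_inner_apply hf hf, real_inner_self_eq_norm_sq,
    real_inner_comm (f x)]
  ring

theorem half_laplacian_norm_sq_of_isothermal {X : E → G} (hX : ContDiff ℝ 3 X) {u v : E}
    (hnorm : ∀ a, ‖fderiv ℝ X a u‖ ^ 2 = ‖fderiv ℝ X a v‖ ^ 2)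
    (horth : ∀ a, ⟪fderiv ℝ X a u, fderiv ℝ X a v⟫ = 0) (x : E) :
    (1 / 2 : ℝ) * (fderiv ℝ (fun a => fderiv ℝ (fun b => ‖fderiv ℝ X b u‖ ^ 2) a u) x u +
        fderiv ℝ (fun a => fderiv ℝ (fun b => ‖fderiv ℝ X b u‖ ^ 2) a v) x v) =
      ‖fderiv ℝ (fun a => fderiv ℝ X a v) x u‖ ^ 2 -
        ⟪fderiv ℝ (fun a => fderiv ℝ X a u) x u, fderiv ℝ (fun a => fderiv ℝ X a v) x v⟫ := by
  have hXu : ContDiff ℝ 2 fun a => fderiv ℝ X a u := hX.fderiv_apply_const (by norm_num) u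
  have hXv : ContDiff ℝ 2 fun a => fderiv ℝ X a v := hX.fderiv_apply_const (by norm_num) v
  have hmixed : (fun a => fderiv ℝ (fun b => fderiv ℝ X b u) a v) =
      fun a => fderiv ℝ (fun b => fderiv ℝ X b v) a u :=
    funext fun a => (hX.of_le (by norm_num)).fderiv_fderiv_apply_comm a u v
  have huuv : fderiv ℝ (fun a => fderiv ℝ (fun b => fderiv ℝ X b v) a u) x u =
      fderiv ℝ (fun a => fderiv ℝ (fun b => fderiv ℝ X b u) a u) x v := by
    rw [← hmixed, hXu.fderiv_fderiv_apply_comm]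
  have hnorm₂ := fderiv_fderiv_norm_sq_apply hXv x u
  rw [← funext hnorm, fderiv_fderiv_norm_sq_apply hXu x u, huuv] at hnorm₂
  have horth₂ := fderiv_fderiv_inner_apply hXu hXv x u v
  simp only [funext horth, fderiv_fun_const, Pi.zero_apply, zero_apply] at horth₂
  rw [congrFun hmixed x, real_inner_self_eq_norm_sq] at horth₂
  rw [fderiv_fderiv_norm_sq_apply hXu x u, fderiv_fderiv_norm_sq_apply hXu x v, hmixed,
    congrFun hmixed x]
  linarith [real_inner_comm (fderiv ℝ X x v)
    (fderiv ℝ (fun a => fderiv ℝ (fun b => fderiv ℝ X b u) a u) x v)]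

end

/-- For a `C³` isothermal parameterization `X : ℝ² → ℝ³`
(`|∂_{α₁}X|² = |∂_{α₂}X|²` and `∂_{α₁}X · ∂_{α₂}X = 0` everywhere), one has
`(1/2) Δ(|∂_{α₁}X|²) = |∂_{α₁}∂_{α₂}X|² − ∂_{α₁}²X · ∂_{α₂}²X` pointwise on `ℝ²`. -/
theorem isothermal_laplacian_identity
    (X : EuclideanSpace ℝ (Fin 2) → EuclideanSpace ℝ (Fin 3))
    (hX : ContDiff ℝ 3 X)
    (iso1 : ∀ α, ‖pdX X 0 α‖ ^ 2 = ‖pdX X 1 α‖ ^ 2)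
    (iso2 : ∀ α, ⟪pdX X 0 α, pdX X 1 α⟫ = 0) :
    ∀ α, (1 / 2 : ℝ) * lap2 (fun a => ‖pdX X 0 a‖ ^ 2) α
      = ‖pdX2 X 0 1 α‖ ^ 2 - ⟪pdX2 X 0 0 α, pdX2 X 1 1 α⟫ := by
  intro α
  rw [lap2, Fin.sum_univ_two]
  exact half_laplacian_norm_sq_of_isothermal hX iso1 iso2 α
end
end
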